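/- arXiv:2105.11558 — 3 statements merged into one kernel-verified Lean document; each statement's English description precedes it below -/
import Mathlib

section
/- Let Y be a real-valued random variable with zero mean satisfying the sub-Gaussian tail bound P(|Y| ≥ t) ≤ 2 exp(−t²/(2ν²)) for all t ≥ 0, for some ν > 0. Then for every λ with 0 ≤ λ ≤ 1/(4ν²), one has E[exp(λ Y²)] ≤ 1 + 8 λ ν². -/
/-!
Writing `exp (λ Y²) - 1 = ∫₀^{Y²} λ e^{λt} dt`, the layer cake formula gives
`E[exp (λ Y²)] - 1 = ∫₀^∞ λ e^{λt} P(Y² ≥ t) dt`. The sub-Gaussian tail bounds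
`P(Y² ≥ t) ≤ 2 e^{-t/(2ν²)}`, so the integrand is at most `2λ e^{-(1/(2ν²) - λ) t}`, whose
integral `2λ / (1/(2ν²) - λ)` is at most `8λν²` as soon as `λ ≤ 1/(4ν²)`.
-/

open MeasureTheory Real Set

section

variable {α : Type*} [MeasurableSpace α] {μ : Measure α}

theorem lintegral_ofReal_exp_neg_mul_Ioi {c : ℝ} (hc : 0 < c) :
    ∫⁻ t in Ioi 0, ENNReal.ofReal (exp (-(c * t))) = ENNReal.ofReal c⁻¹ := by
  have hint : IntegrableOn (fun t ↦ exp (-(c * t))) (Ioi 0) := by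
    simpa only [neg_mul] using exp_neg_integrableOn_Ioi 0 hc
  rw [← ofReal_integral_eq_lintegral_ofReal hint (ae_of_all _ fun t ↦ (exp_pos _).le)]
  simp_rw [← neg_mul]
  rw [integral_exp_mul_Ioi (neg_lt_zero.mpr hc), mul_zero, exp_zero, neg_div_neg_eq, one_div]

theorem lintegral_ofReal_exp_mul_sub_one_eq (μ : Measure α) {f : α → ℝ} (hf_nn : 0 ≤ᵐ[μ] f)
    (hf : AEMeasurable f μ) {lam : ℝ} (hlam : 0 ≤ lam) :
    ∫⁻ ω, ENNReal.ofReal (exp (lam * f ω) - 1) ∂μ =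
      ∫⁻ t in Ioi 0, μ {ω | t ≤ f ω} * ENNReal.ofReal (lam * exp (lam * t)) := by
  have hcont : Continuous fun t ↦ lam * exp (lam * t) := by fun_prop
  have hprimitive (x : ℝ) : ∫ t in 0..x, lam * exp (lam * t) = exp (lam * x) - 1 := by
    simp only [intervalIntegral.integral_const_mul, intervalIntegral.mul_integral_comp_mul_left,
      mul_zero, integral_exp, exp_zero]
  simpa only [hprimitive] using lintegral_comp_eq_lintegral_meas_le_mul μ hf_nn hf
    (fun t _ ↦ hcont.intervalIntegrable 0 t)
    (ae_of_all _ fun t ↦ mul_nonneg hlam (exp_pos _).le)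

theorem lintegral_ofReal_exp_mul_sub_one_le_of_tail {f : α → ℝ} (hf_nn : 0 ≤ᵐ[μ] f)
    (hf : AEMeasurable f μ) {C b lam : ℝ}
    (htail : ∀ t > 0, μ {ω | t ≤ f ω} ≤ ENNReal.ofReal (C * exp (-(b * t))))
    (hlam : 0 ≤ lam) (hlamb : lam < b) :
    ∫⁻ ω, ENNReal.ofReal (exp (lam * f ω) - 1) ∂μ ≤ ENNReal.ofReal (C * lam / (b - lam)) := by
  have hgap : 0 < b - lam := sub_pos.mpr hlamb
  rw [lintegral_ofReal_exp_mul_sub_one_eq μ hf_nn hf hlam]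
  calc ∫⁻ t in Ioi 0, μ {ω | t ≤ f ω} * ENNReal.ofReal (lam * exp (lam * t))
      ≤ ∫⁻ t in Ioi 0, ENNReal.ofReal (C * lam) * ENNReal.ofReal (exp (-((b - lam) * t))) := by
        refine setLIntegral_mono' measurableSet_Ioi fun t ht ↦ ?_
        calc μ {ω | t ≤ f ω} * ENNReal.ofReal (lam * exp (lam * t))
            ≤ ENNReal.ofReal (C * exp (-(b * t))) * ENNReal.ofReal (lam * exp (lam * t)) := by
              gcongr
              exact htail t ht
          _ = ENNReal.ofReal (C * lam) * ENNReal.ofReal (exp (-((b - lam) * t))) := by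
              rw [← ENNReal.ofReal_mul' (by positivity), ← ENNReal.ofReal_mul' (by positivity)]
              congr 1
              rw [show -((b - lam) * t) = -(b * t) + lam * t by ring, exp_add]
              ring
    _ = ENNReal.ofReal (C * lam / (b - lam)) := by
        rw [lintegral_const_mul _ (by fun_prop), lintegral_ofReal_exp_neg_mul_Ioi hgap,
          ← ENNReal.ofReal_mul' (inv_nonneg.mpr hgap.le), div_eq_mul_inv]

theorem measure_le_sq_le_of_measure_le_abs [IsFiniteMeasure μ] {Y : α → ℝ} {g : ℝ → ℝ}
    (htail : ∀ t : ℝ, 0 ≤ t → (μ {ω | t ≤ |Y ω|}).toReal ≤ g t) (t : ℝ) :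
    μ {ω | t ≤ Y ω ^ 2} ≤ ENNReal.ofReal (g (√t)) := by
  have hsub : {ω | t ≤ Y ω ^ 2} ⊆ {ω | √t ≤ |Y ω|} := fun ω hω ↦ by
    simpa [sqrt_sq_eq_abs] using sqrt_le_sqrt hω
  have hg : 0 ≤ g √t := ENNReal.toReal_nonneg.trans (htail _ (sqrt_nonneg t))
  calc μ {ω | t ≤ Y ω ^ 2} ≤ μ {ω | √t ≤ |Y ω|} := measure_mono hsub
    _ ≤ ENNReal.ofReal (g √t) :=
      (ENNReal.le_ofReal_iff_toReal_le (measure_ne_top _ _) hg).mpr (htail _ (sqrt_nonneg t))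

theorem integral_le_one_add_of_lintegral_ofReal_sub_one_le [IsProbabilityMeasure μ] {g : α → ℝ}
    (hg : AEStronglyMeasurable g μ) (hg_one : ∀ᵐ ω ∂μ, 1 ≤ g ω) {B : ℝ} (hB : 0 ≤ B)
    (h : ∫⁻ ω, ENNReal.ofReal (g ω - 1) ∂μ ≤ ENNReal.ofReal B) :
    ∫ ω, g ω ∂μ ≤ 1 + B := by
  have hnn : 0 ≤ᵐ[μ] fun ω ↦ g ω - 1 := hg_one.mono fun ω hω ↦ sub_nonneg.mpr hω
  have hint : Integrable (fun ω ↦ g ω - 1) μ :=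
    ⟨hg.sub aestronglyMeasurable_const,
      (hasFiniteIntegral_iff_ofReal hnn).mpr (h.trans_lt ENNReal.ofReal_lt_top)⟩
  have hsub : ∫ ω, (g ω - 1) ∂μ ≤ B := by
    rw [integral_eq_lintegral_of_nonneg_ae hnn (hg.sub aestronglyMeasurable_const)]
    exact ENNReal.toReal_le_of_le_ofReal hB h
  have hg_int : Integrable g μ := by simpa using (integrable_add_const_iff (c := 1)).mpr hint
  rw [integral_sub hg_int (integrable_const 1), integral_const, probReal_univ, one_smul] at hsub
  linarith

end

theorem tail_integration_general
    {Ω : Type} [MeasurableSpace Ω] (μ : Measure Ω) [IsProbabilityMeasure μ]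
    (Y : Ω → ℝ) (hY : Measurable Y) (ν : ℝ) (hν : 0 < ν)
    (htail : ∀ t : ℝ, 0 ≤ t → (μ {ω | t ≤ |Y ω|}).toReal ≤ 2 * Real.exp (-t ^ 2 / (2 * ν ^ 2)))
    (lam : ℝ) (hlam0 : 0 ≤ lam) (hlam : lam ≤ 1 / (4 * ν ^ 2)) :
    ∫ ω, Real.exp (lam * (Y ω) ^ 2) ∂μ ≤ 1 + 8 * lam * ν ^ 2 := by
  have hsq_tail (t : ℝ) (ht : 0 < t) :
      μ {ω | t ≤ Y ω ^ 2} ≤ ENNReal.ofReal (2 * exp (-(1 / (2 * ν ^ 2) * t))) := by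
    convert measure_le_sq_le_of_measure_le_abs htail t using 4
    rw [sq_sqrt ht.le]
    ring
  have hgap : 1 / (4 * ν ^ 2) ≤ 1 / (2 * ν ^ 2) - lam := by
    have : 1 / (2 * ν ^ 2) = 2 * (1 / (4 * ν ^ 2)) := by field_simp; ring
    linarith
  have hgap_pos : 0 < 1 / (2 * ν ^ 2) - lam := lt_of_lt_of_le (by positivity) hgap
  have hbound : 2 * lam / (1 / (2 * ν ^ 2) - lam) ≤ 8 * lam * ν ^ 2 :=
    calc 2 * lam / (1 / (2 * ν ^ 2) - lam) ≤ 2 * lam / (1 / (4 * ν ^ 2)) :=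
          div_le_div_of_nonneg_left (by positivity) (by positivity) hgap
      _ = 8 * lam * ν ^ 2 := by field_simp; ring
  refine integral_le_one_add_of_lintegral_ofReal_sub_one_le (by fun_prop)
    (ae_of_all _ fun ω ↦ one_le_exp (by positivity)) (by positivity) ?_
  exact (lintegral_ofReal_exp_mul_sub_one_le_of_tail (ae_of_all _ fun ω ↦ sq_nonneg (Y ω))
    (hY.pow_const 2).aemeasurable hsq_tail hlam0 (sub_pos.mp hgap_pos)).trans
    (ENNReal.ofReal_le_ofReal hbound)

/-- If `Y` is a centered real random variable with sub-Gaussian tails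
`P(|Y| ≥ t) ≤ 2 exp(−t²/(2ν²))`, then for `0 ≤ λ ≤ 1/(4ν²)` one has
`E[exp(λ Y²)] ≤ 1 + 8 λ ν²`. -/
theorem tail_integration
    {Ω : Type} [MeasurableSpace Ω] (μ : Measure Ω) [IsProbabilityMeasure μ]
    (Y : Ω → ℝ) (hY : Measurable Y) (ν : ℝ) (hν : 0 < ν)
    (hmean : ∫ ω, Y ω ∂μ = 0)
    (htail : ∀ t : ℝ, 0 ≤ t → (μ {ω | t ≤ |Y ω|}).toReal ≤ 2 * Real.exp (-t ^ 2 / (2 * ν ^ 2)))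
    (lam : ℝ) (hlam0 : 0 ≤ lam) (hlam : lam ≤ 1 / (4 * ν ^ 2)) :
    ∫ ω, Real.exp (lam * (Y ω) ^ 2) ∂μ ≤ 1 + 8 * lam * ν ^ 2 :=
  tail_integration_general μ Y hY ν hν htail lam hlam0 hlam
end

section
/- Let φ : ℝ → ℝ be nondecreasing, 1-Lipschitz with φ(0) = 0, let R_max > 0, and let γ ≤ 1/(2 R_max). Consider iterates a_0 = 0 and a_{τ+1} = a_τ − 2γ (φ(⟨a_τ, x_τ⟩) − b_τ) x_τ for 0 ≤ τ < T, where x_τ ∈ ℝ^d with ‖x_τ‖² ≤ R_max and b_τ ∈ ℝ with |b_τ| ≤ √R_max for every τ (this is one row of the SGD-RER iteration run on data whose squared norms are bounded by R_max). Then ‖a_τ‖ ≤ 2γ R_max τ ≤ 2γ R_max T for every 0 ≤ τ ≤ T. -/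
open Real
open scoped RealInnerProductSpace

noncomputable section

abbrev EVec (d : ℕ) := EuclideanSpace ℝ (Fin d)

/-!
The link part of each step is non-expansive: monotonicity, `φ 0 = 0` and the 1-Lipschitz
bound give `φ(s)² ≤ φ(s) s`, so with `c = 2γ φ(⟨a, x⟩)` the expansion
`‖a - c x‖² = ‖a‖² - 2c ⟨a, x⟩ + c² ‖x‖²` does not exceed `‖a‖²` once `γ ‖x‖² ≤ 1`.
Only the response term `2γ b x`, of norm at most `2γ R_max`, can increase the norm, and
summing these increments over `τ` steps from `a₀ = 0` gives the bound.
-/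

theorem sq_le_mul_self_of_monotone_of_lipschitzWith_one {φ : ℝ → ℝ} (hmono : Monotone φ)
    (hlip : LipschitzWith 1 φ) (h0 : φ 0 = 0) (s : ℝ) : φ s ^ 2 ≤ φ s * s := by
  have habs : |φ s| ≤ |s| := by
    simpa [h0, Real.dist_eq] using hlip.dist_le_mul s 0
  have hsign : 0 ≤ φ s * s := by
    rcases le_total 0 s with hs | hs
    · exact mul_nonneg (h0 ▸ hmono hs) hs
    · exact mul_nonneg_of_nonpos_of_nonpos (h0 ▸ hmono hs) hs
  calc φ s ^ 2 = |φ s| * |φ s| := (sq_abs _).symm.trans (sq _)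
    _ ≤ |φ s| * |s| := by gcongr
    _ = φ s * s := by rw [← abs_mul, abs_of_nonneg hsign]

section Step

variable {E : Type*} [NormedAddCommGroup E] [InnerProductSpace ℝ E]

theorem norm_sub_smul_le_of_sq_le_mul_inner {a x : E} {η p : ℝ} (hη : 0 ≤ η)
    (hηx : η * ‖x‖ ^ 2 ≤ 2) (hp : p ^ 2 ≤ p * ⟪a, x⟫) : ‖a - (η * p) • x‖ ≤ ‖a‖ := by
  have hsq : ‖a - (η * p) • x‖ ^ 2 ≤ ‖a‖ ^ 2 := by
    have hexp : ‖a - (η * p) • x‖ ^ 2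
        = ‖a‖ ^ 2 - η * (2 * p * ⟪a, x⟫ - p ^ 2 * (η * ‖x‖ ^ 2)) := by
      rw [norm_sub_sq_real, real_inner_smul_right, norm_smul, mul_pow, Real.norm_eq_abs, sq_abs]
      ring
    have hdecrease : 0 ≤ 2 * p * ⟪a, x⟫ - p ^ 2 * (η * ‖x‖ ^ 2) := by
      nlinarith [sq_nonneg p]
    rw [hexp]
    nlinarith
  exact (sq_le_sq₀ (norm_nonneg _) (norm_nonneg _)).mp hsq

theorem norm_sgd_step_le {φ : ℝ → ℝ} (hmono : Monotone φ) (hlip : LipschitzWith 1 φ)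
    (h0 : φ 0 = 0) {a x : E} {η b : ℝ} (hη : 0 ≤ η) (hηx : η * ‖x‖ ^ 2 ≤ 2) :
    ‖a - (η * (φ ⟪a, x⟫ - b)) • x‖ ≤ ‖a‖ + η * (|b| * ‖x‖) := by
  have hsplit : a - (η * (φ ⟪a, x⟫ - b)) • x = (a - (η * φ ⟪a, x⟫) • x) + (η * b) • x := by
    module
  have hcontract : ‖a - (η * φ ⟪a, x⟫) • x‖ ≤ ‖a‖ :=
    norm_sub_smul_le_of_sq_le_mul_inner hη hηx
      (sq_le_mul_self_of_monotone_of_lipschitzWith_one hmono hlip h0 _)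
  calc ‖a - (η * (φ ⟪a, x⟫ - b)) • x‖
      ≤ ‖a - (η * φ ⟪a, x⟫) • x‖ + ‖(η * b) • x‖ := hsplit ▸ norm_add_le _ _
    _ ≤ ‖a‖ + η * (|b| * ‖x‖) := by
      rw [norm_smul, Real.norm_eq_abs, abs_mul, abs_of_nonneg hη, mul_assoc]
      linarith

end Step

theorem le_mul_natCast_of_succ_le_add {u : ℕ → ℝ} {c : ℝ} {T : ℕ} (h0 : u 0 ≤ 0)
    (hstep : ∀ τ < T, u (τ + 1) ≤ u τ + c) : ∀ τ ≤ T, u τ ≤ c * τ := by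
  intro τ hτ
  induction τ with
  | zero => simpa using h0
  | succ n ih =>
    have hn : n < T := hτ
    calc u (n + 1) ≤ u n + c := hstep n hn
      _ ≤ c * n + c := by gcongr; exact ih hn.le
      _ = c * (n + 1 : ℕ) := by push_cast; ring

theorem bounded_iterates_general
    {d : ℕ} (φ : ℝ → ℝ) (hmono : Monotone φ) (hlip : LipschitzWith 1 φ) (h0 : φ 0 = 0)
    (Rmax : ℝ) (γ : ℝ) (hγ0 : 0 < γ) (hγ : γ ≤ 1 / (2 * Rmax))
    (T : ℕ) (x : ℕ → EVec d) (b : ℕ → ℝ) (a : ℕ → EVec d)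
    (hx : ∀ τ, ‖x τ‖ ^ 2 ≤ Rmax)
    (hb : ∀ τ, |b τ| ≤ Real.sqrt Rmax)
    (ha0 : a 0 = 0)
    (harec : ∀ τ < T, a (τ + 1) = a τ - (2 * γ * (φ ⟪a τ, x τ⟫ - b τ)) • x τ) :
    ∀ τ ≤ T, ‖a τ‖ ≤ 2 * γ * Rmax * τ ∧ 2 * γ * Rmax * τ ≤ 2 * γ * Rmax * T := by
  have hR : 0 ≤ Rmax := (sq_nonneg _).trans (hx 0)
  have hγR : 2 * γ * Rmax ≤ 1 := by
    rcases hR.eq_or_lt with hR0 | hRpos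
    · simp [← hR0]
    · calc 2 * γ * Rmax = 2 * Rmax * γ := by ring
        _ ≤ 2 * Rmax * (1 / (2 * Rmax)) := by gcongr
        _ = 1 := mul_one_div_cancel (by positivity)
  have hbx : ∀ τ, |b τ| * ‖x τ‖ ≤ Rmax := fun τ => by
    have hxτ : ‖x τ‖ ≤ √Rmax := by simpa using Real.abs_le_sqrt (hx τ)
    calc |b τ| * ‖x τ‖ ≤ √Rmax * √Rmax := by gcongr; exact hb τ
      _ = Rmax := Real.mul_self_sqrt hR
  have hstep : ∀ τ < T, ‖a (τ + 1)‖ ≤ ‖a τ‖ + 2 * γ * Rmax := fun τ hτ => by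
    have hηx : 2 * γ * ‖x τ‖ ^ 2 ≤ 2 := by nlinarith [hx τ]
    rw [harec τ hτ]
    refine (norm_sgd_step_le hmono hlip h0 (by positivity) hηx).trans ?_
    gcongr
    exact hbx τ
  intro τ hτ
  exact ⟨le_mul_natCast_of_succ_le_add (u := fun τ => ‖a τ‖) (by simp [ha0]) hstep τ hτ,
    by gcongr⟩

/-- One row of the SGD-RER iteration, run on data whose squared norms are
bounded by `R_max`, with step size `γ ≤ 1/(2 R_max)`, satisfies `‖a_τ‖ ≤ 2 γ R_max τ ≤ 2 γ R_max T`. -/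
theorem bounded_iterates
    {d : ℕ} (φ : ℝ → ℝ) (hmono : Monotone φ) (hlip : LipschitzWith 1 φ) (h0 : φ 0 = 0)
    (Rmax : ℝ) (hR : 0 < Rmax) (γ : ℝ) (hγ0 : 0 < γ) (hγ : γ ≤ 1 / (2 * Rmax))
    (T : ℕ) (x : ℕ → EVec d) (b : ℕ → ℝ) (a : ℕ → EVec d)
    (hx : ∀ τ, ‖x τ‖ ^ 2 ≤ Rmax)
    (hb : ∀ τ, |b τ| ≤ Real.sqrt Rmax)
    (ha0 : a 0 = 0)
    (harec : ∀ τ < T, a (τ + 1) = a τ - (2 * γ * (φ ⟪a τ, x τ⟫ - b τ)) • x τ) :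
    ∀ τ ≤ T, ‖a τ‖ ≤ 2 * γ * Rmax * τ ∧ 2 * γ * Rmax * τ ≤ 2 * γ * Rmax * T :=
  bounded_iterates_general φ hmono hlip h0 Rmax γ hγ0 hγ T x b a hx hb ha0 harec

end
end

section
/- Let d ≥ 2 and ε > 0. Define A(ε) ∈ ℝ^{d×d} by A(ε)_{ii} = 1/4 for 1 ≤ i ≤ d−1, A(ε)_{dj} = −ε/√(d−1) for 1 ≤ j ≤ d−1, and all other entries 0, and let a_d(ε) denote the d-th row of A(ε) viewed as a vector. Consider the process X_0 = 0, X_{t+1} = ReLU(A(ε) X_t) + η_t, where ReLU(x) = max(x, 0) is applied coordinatewise and the η_t are i.i.d. standard Gaussian N(0, I_d). Then there exist universal constants C₀, C₁ > 0 such that for every t ≥ 2: P(⟨a_d(ε), X_t⟩ > 0) ≤ C₀ exp(−C₁ d). -/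
/-!
For `j < d - 1` the coordinates evolve separately, `X_{t+1,j} = ReLU(X_{t,j} / 4) + η_{t,j}`,
so `X_{t+1,j} ≥ η_{t,j}` and therefore `X_{t+2,j} ≥ ReLU(η_{t,j}) / 4 + η_{t+1,j}`. The last row
of `A(ε)` is a negative multiple of the indicator of these coordinates, so `⟨a_d(ε), X_{t+2}⟩ > 0`
forces `∑_{j < d-1} (ReLU(η_{t,j}) / 4 + η_{t+1,j}) ≤ 0`, a lower tail of a sum of `2(d - 1)`
independent terms. A Chernoff bound at `σ = 1/80` makes it exponentially small in `d`: since
`N(0,1)` puts mass at least `1/27` on `[1, 2]`, `E exp(-σ ReLU(g) / 4) ≤ exp(-1/8667)`, which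
beats the Gaussian cost `E exp(-σ g) = exp(1/12800)`.
-/

open MeasureTheory ProbabilityTheory Real Matrix
open scoped RealInnerProductSpace

noncomputable section

def phiV {d : ℕ} (φ : ℝ → ℝ) (x : EVec d) : EVec d := WithLp.toLp 2 (fun i => φ (x i))

def mvE {d : ℕ} (A : Matrix (Fin d) (Fin d) ℝ) (x : EVec d) : EVec d :=
  Matrix.toEuclideanLin A x

/-- The standard Gaussian measure `N(0, I_d)` on `ℝ^d`. -/
def stdGaussianE (d : ℕ) : Measure (EVec d) :=
  (Measure.pi fun _ : Fin d => ProbabilityTheory.gaussianReal 0 1).map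
    (MeasurableEquiv.toLp 2 (Fin d → ℝ))

/-- The matrix `A(ε)` : `1/4` on the first `d−1` diagonal entries, `−ε/√(d−1)` on the first
`d−1` entries of the last row, zeros elsewhere. -/
def Aeps (d : ℕ) (ε : ℝ) : Matrix (Fin d) (Fin d) ℝ :=
  Matrix.of fun i j =>
    if i = j ∧ (i : ℕ) < d - 1 then (1 / 4 : ℝ)
    else if (i : ℕ) = d - 1 ∧ (j : ℕ) < d - 1 then -ε / Real.sqrt ((d : ℝ) - 1)
    else 0

section Deterministic

variable {d : ℕ} {ε : ℝ}

lemma mvE_Aeps_of_lt (x : EVec d) {j : Fin d} (hj : (j : ℕ) < d - 1) :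
    mvE (Aeps d ε) x j = 4⁻¹ * x j := by
  change ∑ k, Aeps d ε j k * x k = _
  rw [Finset.sum_eq_single j]
  · simp [Aeps, hj]
  · intro k _ hkj
    have : (j : ℕ) ≠ d - 1 := by omega
    simp [Aeps, Ne.symm hkj, this]
  · simp

lemma mvE_Aeps_last (x : EVec d) (hd : d - 1 < d) :
    mvE (Aeps d ε) x ⟨d - 1, hd⟩ = -ε / √((d : ℝ) - 1) * ∑ j : Fin d with j.val < d - 1, x j := by
  change ∑ k, Aeps d ε _ k * x k = _
  rw [Finset.mul_sum, Finset.sum_filter]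
  refine Finset.sum_congr rfl fun k _ => ?_
  by_cases hk : (k : ℕ) < d - 1
  · have : (⟨d - 1, hd⟩ : Fin d) ≠ k := fun h => by simp [← h] at hk
    simp [Aeps, hk, this]
  · simp [Aeps, hk]

lemma sum_lt_zero_of_mvE_Aeps_last_pos (hd : 1 < d) (hε : 0 < ε) {x : EVec d}
    (h : 0 < mvE (Aeps d ε) x ⟨d - 1, by omega⟩) : ∑ j : Fin d with j.val < d - 1, x j < 0 := by
  rw [mvE_Aeps_last] at h
  have hcoef : -ε / √((d : ℝ) - 1) < 0 :=
    div_neg_of_neg_of_pos (neg_lt_zero.mpr hε) (sqrt_pos.mpr (by rw [sub_pos]; exact_mod_cast hd))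
  exact neg_of_mul_pos_right h hcoef.le

lemma relu_Aeps_two_steps_le {x n : ℕ → EVec d}
    (hx : ∀ t, x (t + 1) = phiV (fun y => max y 0) (mvE (Aeps d ε) (x t)) + n t)
    (t : ℕ) {j : Fin d} (hj : (j : ℕ) < d - 1) :
    4⁻¹ * max (n t j) 0 + n (t + 1) j ≤ x (t + 2) j := by
  have hstep : ∀ s, x (s + 1) j = max (mvE (Aeps d ε) (x s) j) 0 + n s j := fun s => by
    rw [hx]; rfl
  have hnoise : n t j ≤ x (t + 1) j := by
    rw [hstep]; linarith [le_max_right (mvE (Aeps d ε) (x t) j) 0]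
  have hrelu : 4⁻¹ * max (n t j) 0 = max (4⁻¹ * n t j) 0 := by
    rw [mul_max_of_nonneg _ _ (by norm_num)]; simp
  rw [hstep, mvE_Aeps_of_lt _ hj, hrelu]
  gcongr

lemma sum_relu_add_sum_nonpos_of_last_pos (hd : 1 < d) (hε : 0 < ε) {x n : ℕ → EVec d}
    (hx : ∀ t, x (t + 1) = phiV (fun y => max y 0) (mvE (Aeps d ε) (x t)) + n t) (t : ℕ)
    (hpos : 0 < mvE (Aeps d ε) (x (t + 2)) ⟨d - 1, by omega⟩) :
    ∑ j : Fin d with j.val < d - 1, 4⁻¹ * max (n t j) 0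
      + ∑ j : Fin d with j.val < d - 1, n (t + 1) j ≤ 0 := by
  rw [← Finset.sum_add_distrib]
  refine ((Finset.sum_le_sum fun j hj => ?_).trans_lt
    (sum_lt_zero_of_mvE_Aeps_last_pos hd hε hpos)).le
  exact relu_Aeps_two_steps_le hx t (Finset.mem_filter.mp hj).2

end Deterministic

lemma one_div_27_le_gaussianReal_Ici_one : 1 / 27 ≤ (gaussianReal 0 1).real (Set.Ici 1) := by
  have hpdf : ∀ x ∈ Set.Icc (1 : ℝ) 2, (√(2 * π))⁻¹ * exp (-2) ≤ gaussianPDFReal 0 1 x := by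
    intro x hx
    rw [gaussianPDFReal, NNReal.coe_one, mul_one, sub_zero]
    gcongr
    nlinarith [hx.1, hx.2]
  have hconst : 1 / 27 ≤ (√(2 * π))⁻¹ * exp (-2) := by
    have hsqrt : √(2 * π) ≤ 3 := sqrt_le_iff.mpr ⟨by norm_num, by nlinarith [pi_le_four]⟩
    have hexp : exp 2 ≤ 9 := by
      rw [show (2 : ℝ) = 1 + 1 by norm_num, exp_add]
      nlinarith [exp_one_lt_d9, exp_pos 1]
    rw [Real.exp_neg, ← mul_inv, one_div]
    gcongr
    nlinarith [sqrt_nonneg (2 * π), exp_pos 2]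
  calc 1 / 27 ≤ ∫ _ in Set.Icc (1 : ℝ) 2, (√(2 * π))⁻¹ * exp (-2) := by
        convert hconst using 1
        rw [setIntegral_const, Real.volume_real_Icc]
        norm_num
    _ ≤ ∫ x in Set.Icc (1 : ℝ) 2, gaussianPDFReal 0 1 x :=
        setIntegral_mono_on (integrableOn_const (by simp))
          (integrable_gaussianPDFReal 0 1).integrableOn measurableSet_Icc hpdf
    _ = (gaussianReal 0 1).real (Set.Icc 1 2) := by
        rw [measureReal_def, gaussianReal_apply_eq_integral 0 one_ne_zero,
          ENNReal.toReal_ofReal (setIntegral_nonneg measurableSet_Icc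
            fun x _ => gaussianPDFReal_nonneg 0 1 x)]
    _ ≤ (gaussianReal 0 1).real (Set.Ici 1) := measureReal_mono Set.Icc_subset_Ici_self

lemma mgf_relu_le {ν : Measure ℝ} [IsProbabilityMeasure ν] {τ : ℝ} (hτ : 0 ≤ τ) :
    mgf (fun x => max x 0) ν (-τ) ≤ 1 - (1 - exp (-τ)) * ν.real (Set.Ici 1) := by
  have hbound : ∀ x, exp (-τ * max x 0) ≤ 1 - (1 - exp (-τ)) * (Set.Ici 1).indicator 1 x := by
    intro x
    by_cases hx : x ∈ Set.Ici (1 : ℝ)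
    · simp only [Set.indicator_of_mem hx, Pi.one_apply, mul_one, sub_sub_cancel]
      gcongr
      simp only [neg_mul, neg_le_neg_iff]
      exact le_mul_of_one_le_right hτ (le_max_of_le_left hx)
    · simp only [Set.indicator_of_notMem hx, mul_zero, sub_zero]
      exact exp_le_one_iff.mpr (by nlinarith [le_max_right x 0])
  have hint : Integrable (fun x => 1 - (1 - exp (-τ)) * (Set.Ici 1).indicator 1 x) ν :=
    (integrable_const 1).sub ((integrable_const 1).indicator measurableSet_Ici |>.const_mul _)
  calc mgf (fun x => max x 0) ν (-τ)
      ≤ ∫ x, 1 - (1 - exp (-τ)) * (Set.Ici 1).indicator 1 x ∂ν :=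
        integral_mono_of_nonneg (ae_of_all _ fun _ => (exp_pos _).le) hint (ae_of_all _ hbound)
    _ = 1 - (1 - exp (-τ)) * ν.real (Set.Ici 1) := by
        rw [integral_sub (integrable_const 1) ((integrable_const 1).indicator measurableSet_Ici
          |>.const_mul _), integral_const_mul, integral_indicator_one measurableSet_Ici]
        simp

lemma mgf_relu_gaussianReal_le :
    mgf (fun x => max x 0) (gaussianReal 0 1) (-320⁻¹) ≤ exp (-8667⁻¹) := by
  have hgap : 321⁻¹ ≤ 1 - exp (-320⁻¹) := by
    have h := add_one_le_exp (320⁻¹ : ℝ)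
    rw [Real.exp_neg]
    have : (exp 320⁻¹)⁻¹ ≤ (1 + 320⁻¹ : ℝ)⁻¹ := inv_anti₀ (by norm_num) (by linarith)
    norm_num at this ⊢
    linarith
  calc mgf (fun x => max x 0) (gaussianReal 0 1) (-320⁻¹)
      ≤ 1 - (1 - exp (-320⁻¹)) * (gaussianReal 0 1).real (Set.Ici 1) := mgf_relu_le (by norm_num)
    _ ≤ 1 - 321⁻¹ * (1 / 27) := by
        gcongr
        exact one_div_27_le_gaussianReal_Ici_one
    _ = 1 - 8667⁻¹ := by norm_num
    _ ≤ exp (-8667⁻¹) := one_sub_le_exp_neg _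

lemma map_ofLp_stdGaussianE (d : ℕ) :
    (stdGaussianE d).map WithLp.ofLp = Measure.pi fun _ : Fin d => gaussianReal 0 1 := by
  rw [stdGaussianE, Measure.map_map (WithLp.measurable_ofLp 2 _) (MeasurableEquiv.measurable _)]
  exact Measure.map_id

section GaussianVector

variable {Ω : Type*} [MeasurableSpace Ω] {μ : Measure Ω} {d : ℕ} {f : Ω → EVec d}

lemma map_coord_eq_gaussianReal (hf : Measurable f) (hlaw : μ.map f = stdGaussianE d)
    (j : Fin d) : μ.map (fun ω => f ω j) = gaussianReal 0 1 := by
  have hcomp : (fun ω => f ω j) = (fun x : Fin d → ℝ => x j) ∘ WithLp.ofLp ∘ f := rfl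
  rw [hcomp, ← Measure.map_map (measurable_pi_apply j) ((WithLp.measurable_ofLp 2 _).comp hf),
    ← Measure.map_map (WithLp.measurable_ofLp 2 _) hf, hlaw, map_ofLp_stdGaussianE,
    (measurePreserving_eval _ j).map_eq]

lemma iIndepFun_coord [IsProbabilityMeasure μ] (hf : Measurable f)
    (hlaw : μ.map f = stdGaussianE d) : iIndepFun (fun j ω => f ω j) μ := by
  rw [iIndepFun_iff_map_fun_eq_pi_map fun j => by fun_prop]
  simp_rw [map_coord_eq_gaussianReal hf hlaw]
  rw [← map_ofLp_stdGaussianE, ← hlaw, Measure.map_map (WithLp.measurable_ofLp 2 _) hf]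
  rfl

lemma mgf_comp_coord (hf : Measurable f) (hlaw : μ.map f = stdGaussianE d) {g : ℝ → ℝ}
    (hg : Measurable g) (j : Fin d) (t : ℝ) :
    mgf (fun ω => g (f ω j)) μ t = mgf g (gaussianReal 0 1) t := by
  rw [← map_coord_eq_gaussianReal hf hlaw j, mgf_map (by fun_prop) (by fun_prop)]
  rfl

end GaussianVector

lemma measure_sum_add_sum_nonpos_le {Ω ι : Type*} [MeasurableSpace Ω] {μ : Measure Ω}
    {Y Z : ι → Ω → ℝ} {s : Finset ι} {t : ℝ} (ht : t ≤ 0)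
    (hY : iIndepFun Y μ) (hZ : iIndepFun Z μ)
    (hYZ : IndepFun (fun ω => ∑ j ∈ s, Y j ω) (fun ω => ∑ j ∈ s, Z j ω) μ)
    (mY : ∀ j, Measurable (Y j)) (mZ : ∀ j, Measurable (Z j))
    (iY : ∀ j ∈ s, Integrable (fun ω => exp (t * Y j ω)) μ)
    (iZ : ∀ j ∈ s, Integrable (fun ω => exp (t * Z j ω)) μ) :
    μ.real {ω | ∑ j ∈ s, Y j ω + ∑ j ∈ s, Z j ω ≤ 0}
      ≤ (∏ j ∈ s, mgf (Y j) μ t) * ∏ j ∈ s, mgf (Z j) μ t := by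
  have := hY.isProbabilityMeasure
  simp_rw [← Finset.sum_apply] at hYZ ⊢
  have hint : Integrable (fun ω => exp (t * (∑ j ∈ s, Y j + ∑ j ∈ s, Z j) ω)) μ :=
    hYZ.integrable_exp_mul_add (hY.integrable_exp_mul_sum mY iY) (hZ.integrable_exp_mul_sum mZ iZ)
  calc μ.real {ω | (∑ j ∈ s, Y j) ω + (∑ j ∈ s, Z j) ω ≤ 0}
      ≤ exp (-t * 0) * mgf (∑ j ∈ s, Y j + ∑ j ∈ s, Z j) μ t :=
        measure_le_le_exp_mul_mgf 0 ht hint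
    _ = (∏ j ∈ s, mgf (Y j) μ t) * ∏ j ∈ s, mgf (Z j) μ t := by
        rw [mul_zero, exp_zero, one_mul, hYZ.mgf_add' (by fun_prop) (by fun_prop),
          hY.mgf_sum mY, hZ.mgf_sum mZ]

lemma measure_sum_relu_add_sum_nonpos_le {Ω : Type*} [MeasurableSpace Ω] {μ : Measure Ω}
    [IsProbabilityMeasure μ] {d : ℕ} {ξ ζ : Ω → EVec d} (hξ : Measurable ξ) (hζ : Measurable ζ)
    (hξζ : IndepFun ξ ζ μ) (hξlaw : μ.map ξ = stdGaussianE d) (hζlaw : μ.map ζ = stdGaussianE d)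
    (s : Finset (Fin d)) :
    μ.real {ω | ∑ j ∈ s, 4⁻¹ * max (ξ ω j) 0 + ∑ j ∈ s, ζ ω j ≤ 0}
      ≤ exp (-(8667⁻¹ - 12800⁻¹)) ^ s.card := by
  set R : Fin d → Ω → ℝ := fun j ω => 4⁻¹ * max (ξ ω j) 0
  have hRmgf : ∀ j, mgf (R j) μ (-80⁻¹) ≤ exp (-8667⁻¹) := fun j => by
    refine (mgf_comp_coord hξ hξlaw (g := fun x => 4⁻¹ * max x 0) (by fun_prop) j _).trans_le ?_
    rw [mgf_const_mul]
    convert mgf_relu_gaussianReal_le using 2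
    norm_num
  have hζmgf : ∀ j, mgf (fun ω => ζ ω j) μ (-80⁻¹) = exp 12800⁻¹ := fun j => by
    rw [mgf_comp_coord hζ hζlaw (g := fun x => x) measurable_id, mgf_fun_id_gaussianReal]
    norm_num
  have hRint : ∀ j, Integrable (fun ω => exp (-80⁻¹ * R j ω)) μ := fun j =>
    .of_mem_Icc 0 1 (by fun_prop) (ae_of_all _ fun ω => ⟨(exp_pos _).le,
      exp_le_one_iff.mpr (mul_nonpos_of_nonpos_of_nonneg (by norm_num) (by positivity))⟩)
  calc μ.real {ω | ∑ j ∈ s, R j ω + ∑ j ∈ s, ζ ω j ≤ 0}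
      ≤ (∏ j ∈ s, mgf (R j) μ (-80⁻¹)) * ∏ j ∈ s, mgf (fun ω => ζ ω j) μ (-80⁻¹) :=
        measure_sum_add_sum_nonpos_le (by norm_num)
          ((iIndepFun_coord hξ hξlaw).comp (fun _ x => 4⁻¹ * max x 0) fun _ => by fun_prop)
          (iIndepFun_coord hζ hζlaw)
          (hξζ.comp (φ := fun x : EVec d => ∑ j ∈ s, 4⁻¹ * max (x j) 0)
            (ψ := fun x : EVec d => ∑ j ∈ s, x j) (by fun_prop) (by fun_prop))
          (fun j => by fun_prop) (fun j => by fun_prop) (fun j _ => hRint j)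
          (fun j _ => mgf_pos_iff.mp (by rw [hζmgf]; positivity))
    _ ≤ exp (-8667⁻¹) ^ s.card * exp 12800⁻¹ ^ s.card := by
        rw [Finset.prod_congr rfl fun j _ => hζmgf j, Finset.prod_const]
        gcongr
        exact (Finset.prod_le_prod (fun _ _ => mgf_nonneg) fun j _ => hRmgf j).trans_eq
          (Finset.prod_const _)
    _ = exp (-(8667⁻¹ - 12800⁻¹)) ^ s.card := by
        rw [← mul_pow, ← exp_add]
        ring_nf

/-- `⟨a_d(ε), X_t⟩` is the last coordinate, of index `d - 1`, of `A(ε) X_t`. -/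
theorem relu_last_coordinate_negativity :
    ∃ C₀ C₁ : ℝ, 0 < C₀ ∧ 0 < C₁ ∧
      ∀ (d : ℕ) (hd : 2 ≤ d) (ε : ℝ), 0 < ε →
      ∀ (Ω : Type) (_ : MeasurableSpace Ω) (μ : Measure Ω), IsProbabilityMeasure μ →
      ∀ (η : ℕ → Ω → EVec d) (X : ℕ → Ω → EVec d),
        (∀ t, Measurable (η t)) →
        iIndepFun η μ →
        (∀ t, Measure.map (η t) μ = stdGaussianE d) →
        (∀ ω, X 0 ω = 0) →
        (∀ t ω, X (t + 1) ω = phiV (fun x => max x 0) (mvE (Aeps d ε) (X t ω)) + η t ω) →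
        ∀ t : ℕ, 2 ≤ t →
          (μ {ω | 0 < mvE (Aeps d ε) (X t ω) ⟨d - 1, by omega⟩}).toReal ≤
            C₀ * Real.exp (-C₁ * d) := by
  refine ⟨exp (8667⁻¹ - 12800⁻¹), 8667⁻¹ - 12800⁻¹, exp_pos _, by norm_num, ?_⟩
  intro d hd ε hε Ω _ μ _ η X hη hind hlaw _ hX t ht
  obtain ⟨r, rfl⟩ : ∃ r, t = r + 2 := ⟨t - 2, by omega⟩
  calc (μ {ω | 0 < mvE (Aeps d ε) (X (r + 2) ω) ⟨d - 1, by omega⟩}).toReal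
      ≤ μ.real {ω | ∑ j : Fin d with j.val < d - 1, 4⁻¹ * max (η r ω j) 0
          + ∑ j : Fin d with j.val < d - 1, η (r + 1) ω j ≤ 0} :=
        measureReal_mono fun ω hω =>
          sum_relu_add_sum_nonpos_of_last_pos hd hε (x := (X · ω)) (n := (η · ω)) (hX · ω) r hω
    _ ≤ exp (-(8667⁻¹ - 12800⁻¹)) ^ (d - 1) := by
        convert measure_sum_relu_add_sum_nonpos_le (hη r) (hη (r + 1))
          (hind.indepFun (by omega)) (hlaw r) (hlaw (r + 1)) _
        rw [Fin.card_filter_val_lt, min_eq_right (by omega)]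
    _ = exp (8667⁻¹ - 12800⁻¹) * exp (-(8667⁻¹ - 12800⁻¹) * d) := by
        rw [← exp_nat_mul, ← exp_add, Nat.cast_sub (by omega)]
        ring_nf

end
end
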